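/- arXiv:1301.3482 — 6 statements merged into one kernel-verified Lean document; each statement's English description precedes it below -/
import Mathlib

section
/- Suppose an MMDC matching between A and B exists. Then the graph G has a perfect matching, i.e., there exists a bijection f : V_S → V_T such that (v, f v) is an allowed edge for every v ∈ V_S. -/
/- The bipartite graph `G` of Rajabi-Alni and Bagheri, for the case
`∑ i, α' i > ∑ j, β j` (compensator set `Y` added to the right side `T`). -/

/-- Left vertex set `V_S`: copies `A_i`, extra copies `A'_i`, dummy sets `X_j`,
dummy sets `W_j`. -/
abbrev VS (s t : ℕ) (α α' : Fin s → ℕ) (β β' : Fin t → ℕ) : Type :=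
  ((i : Fin s) × Fin (α i)) ⊕ ((i : Fin s) × Fin (α' i - α i)) ⊕
    ((j : Fin t) × Fin (β' j - β j)) ⊕ ((j : Fin t) × Fin (s - β' j))

/-- Right vertex set `V_T`: the vertices `b_{j,i}` together with the compensator set `Y`. -/
abbrev VT (s t : ℕ) (α' : Fin s → ℕ) (β : Fin t → ℕ) : Type :=
  (Fin t × Fin s) ⊕ Fin (∑ i, α' i - ∑ j, β j)

variable {s t : ℕ}

/-- The allowed edges of `G`. -/
def Allowed (α α' : Fin s → ℕ) (β β' : Fin t → ℕ) :
    VS s t α α' β β' → VT s t α' β → Prop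
  | Sum.inl ⟨i, _⟩, Sum.inl (_, i') => i' = i            -- A_i-copy to b_{j,i}
  | Sum.inl _, Sum.inr _ => False
  | Sum.inr (Sum.inl ⟨i, _⟩), Sum.inl (_, i') => i' = i  -- A'_i-copy to b_{j,i}
  | Sum.inr (Sum.inl _), Sum.inr _ => True               -- A'_i-copy to Y
  | Sum.inr (Sum.inr (Sum.inl ⟨j, _⟩)), Sum.inl (j', _) => j' = j  -- X_j to b_{j,i}
  | Sum.inr (Sum.inr (Sum.inl _)), Sum.inr _ => True     -- X_j to Y
  | Sum.inr (Sum.inr (Sum.inr ⟨j, _⟩)), Sum.inl (j', _) => j' = j  -- W_j to b_{j,i}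
  | Sum.inr (Sum.inr (Sum.inr _)), Sum.inr _ => False

/-- The weights of the edges of `G`. -/
def weight (δ : Fin s → Fin t → ℝ) (γ' γ'' : ℝ) (α α' : Fin s → ℕ) (β β' : Fin t → ℕ) :
    VS s t α α' β β' → VT s t α' β → ℝ
  | Sum.inl ⟨i, _⟩, Sum.inl (j, _) => δ i j
  | Sum.inl _, Sum.inr _ => 0
  | Sum.inr (Sum.inl ⟨i, _⟩), Sum.inl (j, _) => δ i j
  | Sum.inr (Sum.inl _), Sum.inr _ => 0
  | Sum.inr (Sum.inr (Sum.inl _)), Sum.inl _ => γ'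
  | Sum.inr (Sum.inr (Sum.inl _)), Sum.inr _ => γ''
  | Sum.inr (Sum.inr (Sum.inr _)), _ => 0

/-- A perfect matching of `G`: a bijection `f : V_S → V_T` such that `(v, f v)` is an
allowed edge for every `v`. -/
def IsPerfectMatching (α α' : Fin s → ℕ) (β β' : Fin t → ℕ)
    (f : VS s t α α' β β' ≃ VT s t α' β) : Prop :=
  ∀ v, Allowed α α' β β' v (f v)

/-- Total weight of a perfect matching of `G`. -/
def totalWeight (δ : Fin s → Fin t → ℝ) (γ' γ'' : ℝ) (α α' : Fin s → ℕ) (β β' : Fin t → ℕ)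
    (f : VS s t α α' β β' ≃ VT s t α' β) : ℝ :=
  ∑ v, weight δ γ' γ'' α α' β β' v (f v)

/-- Main weight of a perfect matching of `G`: the sum of `δ i j` over those `v` in the
`A_i`'s and `A'_i`'s with `f v = b_{j,i}`. -/
def mainWeight (δ : Fin s → Fin t → ℝ) (α α' : Fin s → ℕ) (β β' : Fin t → ℕ)
    (f : VS s t α α' β β' ≃ VT s t α' β) : ℝ :=
  (∑ v : (i : Fin s) × Fin (α i),
    match f (Sum.inl v) with
    | Sum.inl (j, i') => if i' = v.1 then δ v.1 j else 0
    | Sum.inr _ => 0) +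
  (∑ v : (i : Fin s) × Fin (α' i - α i),
    match f (Sum.inr (Sum.inl v)) with
    | Sum.inl (j, i') => if i' = v.1 then δ v.1 j else 0
    | Sum.inr _ => 0)

/-- An MMDC matching between `A` and `B`: each `aᵢ` is matched to at least `α i` and at
most `α' i` points of `B`, and each `bⱼ` is matched to at least `β j` and at most `β' j`
points of `A`. -/
def IsMMDC {s t : ℕ} (α α' : Fin s → ℕ) (β β' : Fin t → ℕ)
    (L : Finset (Fin s × Fin t)) : Prop :=
  (∀ i, α i ≤ (L.filter fun p => p.1 = i).card ∧ (L.filter fun p => p.1 = i).card ≤ α' i) ∧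
  (∀ j, β j ≤ (L.filter fun p => p.2 = j).card ∧ (L.filter fun p => p.2 = j).card ≤ β' j)

/-- The cost of an MMDC matching. -/
def cost {s t : ℕ} (δ : Fin s → Fin t → ℝ) (L : Finset (Fin s × Fin t)) : ℝ :=
  ∑ p ∈ L, δ p.1 p.2


/-!
Given an MMDC matching `L`, split both sides of `G` into blocks, one for each `a_i` and one for
each `b_j`. The block of `a_i` has the `α' i` copies of `a_i` on the left, and on the right the
vertices `b_{j,i}` with `(i, j) ∈ L` together with `α' i - deg_L a_i` vertices of `Y`. The block
of `b_j` has `X_j ∪ W_j` (`s - β j` vertices) on the left, and on the right the vertices `b_{j,i}`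
with `(i, j) ∉ L` together with `deg_L b_j - β j` vertices of `Y`; since both degree sums equal
`|L|`, these slices exactly fill `Y`. The degree bounds of `L` make the two sides of each block
equally large, with at least as many `b`-vertices as there are left vertices without an edge to
`Y` (the copies in `A_i` and `W_j`). Any blockwise bijection sending those vertices to
`b`-vertices is then a perfect matching.
-/

open Finset

section Counting

variable {α β γ : Type*}

theorem exists_equiv_forall_imp_of_card_le [Finite α] [Finite β] {p : α → Prop} {q : β → Prop}
    (hcard : Nat.card α = Nat.card β) (hpq : Nat.card {a // p a} ≤ Nat.card {b // q b}) :
    ∃ e : α ≃ β, ∀ a, p a → q (e a) := by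
  classical
  have := Fintype.ofFinite α
  have := Fintype.ofFinite β
  obtain ⟨φ⟩ := Function.Embedding.nonempty_of_card_le (α := {a // p a}) (β := {b // q b})
    (by simpa only [Nat.card_eq_fintype_card] using hpq)
  obtain ⟨e₀⟩ := Finite.card_eq.1 hcard
  let f : α → β := fun a => if h : p a then φ ⟨a, h⟩ else e₀ a
  have hf (a : α) (h : p a) : f a = φ ⟨a, h⟩ := dif_pos h
  obtain ⟨g, hg⟩ := Set.MapsTo.exists_equiv_extend_of_card_eq (s := {a | p a}) (f := f)
    (t := univ) (by rw [card_univ, ← Nat.card_eq_fintype_card, hcard, Nat.card_eq_fintype_card])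
    (fun _ _ => mem_coe.2 (mem_univ _))
    (fun a ha a' ha' h => by
      rw [hf a ha, hf a' ha'] at h
      exact congrArg Subtype.val (φ.injective (Subtype.ext h)))
  refine ⟨g.trans (Equiv.subtypeUnivEquiv mem_univ), fun a ha => ?_⟩
  simp only [Equiv.trans_apply, Equiv.subtypeUnivEquiv_apply, hg a ha, hf a ha]
  exact (φ ⟨a, ha⟩).2

theorem exists_fiberwise_equiv_forall_imp_of_card_le [Finite α] [Finite β]
    (f : α → γ) (g : β → γ) {p : α → Prop} {q : β → Prop}
    (hcard : ∀ c, Nat.card {a // f a = c} = Nat.card {b // g b = c})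
    (hpq : ∀ c, Nat.card {a // f a = c ∧ p a} ≤ Nat.card {b // g b = c ∧ q b}) :
    ∃ e : α ≃ β, ∀ a, g (e a) = f a ∧ (p a → q (e a)) := by
  have hfiber (c : γ) :
      ∃ e : {a // f a = c} ≃ {b // g b = c}, ∀ a : {a // f a = c}, p a → q (e a) :=
    exists_equiv_forall_imp_of_card_le (p := fun a : {a // f a = c} => p a)
      (q := fun b : {b // g b = c} => q b) (hcard c) <| by
      simpa only [Nat.card_congr (Equiv.subtypeSubtypeEquivSubtypeInter _ _)] using hpq c
  choose e he using hfiber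
  exact ⟨Equiv.ofFiberEquiv e, fun a => ⟨Equiv.ofFiberEquiv_map e a, he _ ⟨a, rfl⟩⟩⟩

theorem exists_fin_natCard_fiber_eq [Fintype γ] (k : γ → ℕ) {N : ℕ} (hN : ∑ c, k c = N) :
    ∃ f : Fin N → γ, ∀ c, Nat.card {x // f x = c} = k c := by
  obtain ⟨e⟩ : Nonempty (Fin N ≃ Σ c, Fin (k c)) := Fintype.card_eq.1 (by simp [hN])
  refine ⟨fun x => (e x).1, fun c => ?_⟩
  rw [Nat.card_congr (e.subtypeEquiv (p := fun x => (e x).1 = c) (q := fun y => y.1 = c)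
    fun _ => Iff.rfl), Nat.card_congr (Equiv.sigmaSubtype c), Nat.card_fin]

theorem natCard_sigma_fst_eq {F : γ → Type*} (c : γ) :
    Nat.card {x : Σ c, F c // x.1 = c} = Nat.card (F c) :=
  Nat.card_congr (Equiv.sigmaSubtype c)

theorem natCard_sumElim_fiber [Finite α] [Finite β] (f : α → γ) (g : β → γ) (c : γ) :
    Nat.card {x // Sum.elim f g x = c} = Nat.card {a // f a = c} + Nat.card {b // g b = c} := by
  rw [Nat.card_congr Equiv.subtypeSum, Nat.card_sum]
  rfl

theorem natCard_sumElim_fiber_isLeft [Finite α] [Finite β] (f : α → γ) (g : β → γ) (c : γ) :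
    Nat.card {x // Sum.elim f g x = c ∧ x.isLeft} = Nat.card {a // f a = c} := by
  rw [Nat.card_congr Equiv.subtypeSum, Nat.card_sum]
  simp

theorem natCard_mk_mem_eq_card_filter_fst [DecidableEq α] (L : Finset (α × β)) (a : α) :
    Nat.card {b // (a, b) ∈ L} = #{p ∈ L | p.1 = a} := by
  rw [← Nat.card_eq_finsetCard]
  refine Nat.card_congr
    { toFun b := ⟨(a, b.1), mem_filter.2 ⟨b.2, rfl⟩⟩
      invFun p := ⟨p.1.2, ?_⟩
      left_inv _ := rfl
      right_inv := ?_ }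
  · obtain ⟨hp, hpa⟩ := mem_filter.1 p.2
    exact (Prod.ext hpa rfl : p.1 = (a, p.1.2)) ▸ hp
  · rintro ⟨p, hp⟩
    obtain ⟨-, rfl⟩ := mem_filter.1 hp
    rfl

theorem natCard_mk_mem_eq_card_filter_snd [DecidableEq β] (L : Finset (α × β)) (b : β) :
    Nat.card {a // (a, b) ∈ L} = #{p ∈ L | p.2 = b} := by
  rw [← Nat.card_eq_finsetCard]
  refine Nat.card_congr
    { toFun a := ⟨(a.1, b), mem_filter.2 ⟨a.2, rfl⟩⟩
      invFun p := ⟨p.1.1, ?_⟩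
      left_inv _ := rfl
      right_inv := ?_ }
  · obtain ⟨hp, hpb⟩ := mem_filter.1 p.2
    exact (Prod.ext rfl hpb : p.1 = (p.1.1, b)) ▸ hp
  · rintro ⟨p, hp⟩
    obtain ⟨-, rfl⟩ := mem_filter.1 hp
    rfl

end Counting

section Blocks

variable (α α' : Fin s → ℕ) (β β' : Fin t → ℕ)

def leftBlock : VS s t α α' β β' → Fin s ⊕ Fin t
  | .inl ⟨i, _⟩ | .inr (.inl ⟨i, _⟩) => .inl i
  | .inr (.inr (.inl ⟨j, _⟩)) | .inr (.inr (.inr ⟨j, _⟩)) => .inr j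

def HasNoEdgeToY : VS s t α α' β β' → Prop
  | .inl _ | .inr (.inr (.inr _)) => True
  | .inr (.inl _) | .inr (.inr (.inl _)) => False

theorem natCard_leftBlock_fiber (k : Fin s ⊕ Fin t) :
    Nat.card {v // leftBlock α α' β β' v = k} =
      Sum.elim (fun i => α i + (α' i - α i)) (fun j => β' j - β j + (s - β' j)) k := by
  simp only [Nat.card_congr Equiv.subtypeSum, Nat.card_sum]
  rcases k with i | j <;> simp only [leftBlock, Sum.inl.injEq, Sum.inr.injEq, reduceCtorEq] <;>
    simp only [natCard_sigma_fst_eq, Nat.card_fin, Nat.card_of_isEmpty, Sum.elim_inl,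
      Sum.elim_inr] <;> omega

theorem natCard_leftBlock_fiber_hasNoEdgeToY (k : Fin s ⊕ Fin t) :
    Nat.card {v // leftBlock α α' β β' v = k ∧ HasNoEdgeToY α α' β β' v} =
      Sum.elim α (fun j => s - β' j) k := by
  simp only [Nat.card_congr Equiv.subtypeSum, Nat.card_sum]
  rcases k with i | j <;>
    simp only [leftBlock, HasNoEdgeToY, Sum.inl.injEq, Sum.inr.injEq, reduceCtorEq, and_true,
      and_false] <;>
    simp only [natCard_sigma_fst_eq, Nat.card_fin, Nat.card_of_isEmpty, Sum.elim_inl,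
      Sum.elim_inr] <;> omega

end Blocks

def bBlock (L : Finset (Fin s × Fin t)) : Fin t × Fin s → Fin s ⊕ Fin t
  | (j, i) => if (i, j) ∈ L then .inl i else .inr j

section BBlockCount

variable {L : Finset (Fin s × Fin t)}

theorem bBlock_eq_inl_iff {b : Fin t × Fin s} {i : Fin s} :
    bBlock L b = .inl i ↔ (i, b.1) ∈ L ∧ b.2 = i := by
  obtain ⟨j, i'⟩ := b
  simp only [bBlock]
  split_ifs <;> aesop

theorem bBlock_eq_inr_iff {b : Fin t × Fin s} {j : Fin t} :
    bBlock L b = .inr j ↔ (b.2, j) ∉ L ∧ b.1 = j := by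
  obtain ⟨j', i⟩ := b
  simp only [bBlock]
  split_ifs <;> aesop

variable (L)

theorem natCard_bBlock_fiber_inl (i : Fin s) :
    Nat.card {b // bBlock L b = .inl i} = #{p ∈ L | p.1 = i} := by
  rw [← natCard_mk_mem_eq_card_filter_fst]
  exact Nat.card_congr
    { toFun b := ⟨b.1.1, (bBlock_eq_inl_iff.1 b.2).1⟩
      invFun j := ⟨(j.1, i), bBlock_eq_inl_iff.2 ⟨j.2, rfl⟩⟩
      left_inv := by rintro ⟨b, hb⟩; obtain ⟨-, rfl⟩ := bBlock_eq_inl_iff.1 hb; rfl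
      right_inv _ := rfl }

theorem natCard_bBlock_fiber_inr (j : Fin t) :
    Nat.card {b // bBlock L b = .inr j} = s - #{p ∈ L | p.2 = j} := by
  have hcompl : Nat.card {b // bBlock L b = .inr j} = Nat.card {i // (i, j) ∉ L} :=
    Nat.card_congr
      { toFun b := ⟨b.1.2, (bBlock_eq_inr_iff.1 b.2).1⟩
        invFun i := ⟨(j, i.1), bBlock_eq_inr_iff.2 ⟨i.2, rfl⟩⟩
        left_inv := by rintro ⟨b, hb⟩; obtain ⟨-, rfl⟩ := bBlock_eq_inr_iff.1 hb; rfl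
        right_inv _ := rfl }
  rw [hcompl, Nat.card_eq_fintype_card, Fintype.card_subtype_compl, Fintype.card_fin,
    ← Nat.card_eq_fintype_card, natCard_mk_mem_eq_card_filter_snd]

end BBlockCount

theorem allowed_of_leftBlock_eq {α α' : Fin s → ℕ} {β β' : Fin t → ℕ}
    {L : Finset (Fin s × Fin t)} {c : Fin (∑ i, α' i - ∑ j, β j) → Fin s ⊕ Fin t}
    {v : VS s t α α' β β'} {w : VT s t α' β}
    (hblock : Sum.elim (bBlock L) c w = leftBlock α α' β β' v)
    (hrigid : HasNoEdgeToY α α' β β' v → w.isLeft) :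
    Allowed α α' β β' v w := by
  rcases v with ⟨i, x⟩ | ⟨i, x⟩ | ⟨j, x⟩ | ⟨j, x⟩ <;> rcases w with b | y <;>
    simp_all [Allowed, leftBlock, HasNoEdgeToY, bBlock_eq_inl_iff, bBlock_eq_inr_iff]

section Compensator

variable {α α' : Fin s → ℕ} {β β' : Fin t → ℕ} {L : Finset (Fin s × Fin t)}

def compensatorSize (α' : Fin s → ℕ) (β : Fin t → ℕ) (L : Finset (Fin s × Fin t)) :
    Fin s ⊕ Fin t → ℕ :=
  Sum.elim (fun i => α' i - #{p ∈ L | p.1 = i}) fun j => #{p ∈ L | p.2 = j} - β j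

theorem IsMMDC.sum_compensatorSize (hL : IsMMDC α α' β β' L) :
    ∑ k, compensatorSize α' β L k = ∑ i, α' i - ∑ j, β j := by
  obtain ⟨hrow, hcol⟩ := hL
  have hrows : ∑ i, #{p ∈ L | p.1 = i} = #L :=
    (card_eq_sum_card_fiberwise fun p _ => mem_univ p.1).symm
  have hcols : ∑ j, #{p ∈ L | p.2 = j} = #L :=
    (card_eq_sum_card_fiberwise fun p _ => mem_univ p.2).symm
  have hα' : ∑ i, #{p ∈ L | p.1 = i} ≤ ∑ i, α' i := sum_le_sum fun i _ => (hrow i).2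
  have hβ : ∑ j, β j ≤ ∑ j, #{p ∈ L | p.2 = j} := sum_le_sum fun j _ => (hcol j).1
  rw [Fintype.sum_sum_type, compensatorSize]
  simp only [Sum.elim_inl, Sum.elim_inr]
  rw [sum_tsub_distrib _ fun i _ => (hrow i).2, sum_tsub_distrib _ fun j _ => (hcol j).1]
  omega

theorem IsMMDC.natCard_leftBlock_fiber_eq (hL : IsMMDC α α' β β' L) (hαα' : ∀ i, α i ≤ α' i)
    (hββ' : ∀ j, β j ≤ β' j) (hβ's : ∀ j, β' j ≤ s)
    {c : Fin (∑ i, α' i - ∑ j, β j) → Fin s ⊕ Fin t}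
    (hc : ∀ k, Nat.card {y // c y = k} = compensatorSize α' β L k) (k : Fin s ⊕ Fin t) :
    Nat.card {v // leftBlock α α' β β' v = k} = Nat.card {w // Sum.elim (bBlock L) c w = k} := by
  rw [natCard_leftBlock_fiber, natCard_sumElim_fiber, hc]
  rcases k with i | j
  · rw [natCard_bBlock_fiber_inl]
    simp only [compensatorSize, Sum.elim_inl]
    have := hL.1 i
    have := hαα' i
    omega
  · rw [natCard_bBlock_fiber_inr]
    simp only [compensatorSize, Sum.elim_inr]
    have := hL.2 j
    have := hββ' j
    have := hβ's j
    omega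

theorem IsMMDC.natCard_leftBlock_fiber_hasNoEdgeToY_le (hL : IsMMDC α α' β β' L)
    (k : Fin s ⊕ Fin t) :
    Nat.card {v // leftBlock α α' β β' v = k ∧ HasNoEdgeToY α α' β β' v} ≤
      Nat.card {b // bBlock L b = k} := by
  rw [natCard_leftBlock_fiber_hasNoEdgeToY]
  rcases k with i | j
  · rw [natCard_bBlock_fiber_inl]
    exact (hL.1 i).1
  · rw [natCard_bBlock_fiber_inr]
    exact Nat.sub_le_sub_left (hL.2 j).2 s

end Compensator

theorem exists_perfectMatching_of_exists_MMDC_general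
    (s t : ℕ)
    (α α' : Fin s → ℕ) (β β' : Fin t → ℕ)
    (hαα' : ∀ i, α i ≤ α' i)
    (hββ' : ∀ j, β j ≤ β' j) (hβ's : ∀ j, β' j ≤ s)
    (hL : ∃ L, IsMMDC α α' β β' L) :
    ∃ f : VS s t α α' β β' ≃ VT s t α' β, IsPerfectMatching α α' β β' f := by
  obtain ⟨L, hL⟩ := hL
  obtain ⟨c, hc⟩ := exists_fin_natCard_fiber_eq _ hL.sum_compensatorSize
  obtain ⟨e, he⟩ := exists_fiberwise_equiv_forall_imp_of_card_le (leftBlock α α' β β')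
    (Sum.elim (bBlock L) c) (hL.natCard_leftBlock_fiber_eq hαα' hββ' hβ's hc) fun k => by
      rw [natCard_sumElim_fiber_isLeft]
      exact hL.natCard_leftBlock_fiber_hasNoEdgeToY_le k
  exact ⟨e, fun v => allowed_of_leftBlock_eq (he v).1 (he v).2⟩

/-- If an MMDC matching between `A` and `B` exists, then `G` has a
perfect matching. -/
theorem exists_perfectMatching_of_exists_MMDC
    (s t : ℕ) (hs : 0 < s) (ht : 0 < t)
    (δ : Fin s → Fin t → ℝ) (α α' : Fin s → ℕ) (β β' : Fin t → ℕ)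
    (hαα' : ∀ i, α i ≤ α' i) (hα't : ∀ i, α' i ≤ t)
    (hββ' : ∀ j, β j ≤ β' j) (hβ's : ∀ j, β' j ≤ s)
    (hbal : ∑ j, β j < ∑ i, α' i)
    (γ' γ'' : ℝ) (hγ : γ' < γ'') (hγδ : ∀ i j, γ'' < δ i j)
    (hL : ∃ L, IsMMDC α α' β β' L) :
    ∃ f : VS s t α α' β β' ≃ VT s t α' β, IsPerfectMatching α α' β β' f :=
  exists_perfectMatching_of_exists_MMDC_general s t α α' β β' hαα' hββ' hβ's hL
end

section
/- For every MMDC matching L between A and B, there exists a perfect matching f of the graph G whose main weight equals the cost of L, i.e., w_main(f) = c(L). -/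
variable {s t : ℕ}

/-! Let `d i` and `e j` be the degrees of `a_i` and `b_j` in `L`. Of the `α' i` copies of
`a_i`, the first `d i` (among them all of `A_i`, as `α i ≤ d i`) are matched to the cells
`b_{j,i}` with `(i, j) ∈ L` and the others to `Y`. Of the `s - β j` dummy vertices `X_j ∪ W_j`
of `b_j`, the first `e j - β j` (all in `X_j`, as `e j ≤ β' j`) are matched to `Y` and the others
to the cells `b_{j,i}` with `(i, j) ∉ L`. As `∑ d i = ∑ e j = |L|`, exactly `∑ α' i - ∑ β j`
vertices go to `Y`, so this is a bijection, and its main edges are the pairs of `L`. -/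
open Finset

namespace MMDC

section Grid

variable {ι κ : Type*} (L : Finset (ι × κ))

def rowDeg [DecidableEq ι] (i : ι) : ℕ := #(L.filter fun p => p.1 = i)

def colDeg [DecidableEq κ] (j : κ) : ℕ := #(L.filter fun p => p.2 = j)

lemma sum_rowDeg [Fintype ι] [DecidableEq ι] : ∑ i, rowDeg L i = #L :=
  (card_eq_sum_card_fiberwise fun p _ => mem_univ p.1).symm

lemma sum_colDeg [Fintype κ] [DecidableEq κ] : ∑ j, colDeg L j = #L :=
  (card_eq_sum_card_fiberwise fun p _ => mem_univ p.2).symm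

def filterFstEquiv [DecidableEq ι] (i : ι) :
    (L.filter fun p => p.1 = i) ≃ {j // (i, j) ∈ L} where
  toFun p := ⟨p.1.2, by obtain ⟨hp, h⟩ := mem_filter.1 p.2; simpa [← h] using hp⟩
  invFun j := ⟨(i, j), mem_filter.2 ⟨j.2, rfl⟩⟩
  left_inv := by rintro ⟨⟨i', j⟩, hp⟩; obtain ⟨-, rfl⟩ := mem_filter.1 hp; rfl
  right_inv _ := rfl

def filterSndEquiv [DecidableEq κ] (j : κ) :
    (L.filter fun p => p.2 = j) ≃ {i // (i, j) ∈ L} where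
  toFun p := ⟨p.1.1, by obtain ⟨hp, h⟩ := mem_filter.1 p.2; simpa [← h] using hp⟩
  invFun i := ⟨(i, j), mem_filter.2 ⟨i.2, rfl⟩⟩
  left_inv := by rintro ⟨⟨i, j'⟩, hp⟩; obtain ⟨-, rfl⟩ := mem_filter.1 hp; rfl
  right_inv _ := rfl

noncomputable def finRowEquiv [DecidableEq ι] (i : ι) :
    Fin (rowDeg L i) ≃ {j // (i, j) ∈ L} :=
  (L.filter _).equivFin.symm.trans (filterFstEquiv L i)

noncomputable def finColComplEquiv [Fintype ι] [DecidableEq ι] [DecidableEq κ] (j : κ) :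
    Fin (Fintype.card ι - colDeg L j) ≃ {i // (i, j) ∉ L} :=
  (Fintype.equivFinOfCardEq (by
    rw [Fintype.card_subtype_compl, ← Fintype.card_congr (filterSndEquiv L j),
      Fintype.card_coe, colDeg])).symm

noncomputable def cellEquiv [Fintype ι] [DecidableEq ι] [DecidableEq κ] :
    (Σ i, Fin (rowDeg L i)) ⊕ (Σ j, Fin (Fintype.card ι - colDeg L j)) ≃ κ × ι :=
  (Equiv.sumCongr
      ((Equiv.sigmaCongrRight (finRowEquiv L)).trans <|
        (Equiv.subtypeProdEquivSigmaSubtype fun i j => (i, j) ∈ L).symm.trans <|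
          Equiv.subtypeEquiv (Equiv.prodComm ι κ) fun _ => Iff.rfl)
      ((Equiv.sigmaCongrRight (finColComplEquiv L)).trans
        (Equiv.subtypeProdEquivSigmaSubtype fun j i => (i, j) ∉ L).symm)).trans
    (Equiv.sumCompl fun q : κ × ι => (q.2, q.1) ∈ L)

lemma cellEquiv_inl [Fintype ι] [DecidableEq ι] [DecidableEq κ] (i : ι) (m : Fin (rowDeg L i)) :
    cellEquiv L (.inl ⟨i, m⟩) = ((finRowEquiv L i m).1, i) := rfl

lemma cellEquiv_inr [Fintype ι] [DecidableEq ι] [DecidableEq κ] (j : κ)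
    (m : Fin (Fintype.card ι - colDeg L j)) :
    cellEquiv L (.inr ⟨j, m⟩) = (j, (finColComplEquiv L j m).1) := rfl

lemma sum_eq_sum_finRowEquiv [Fintype ι] [DecidableEq ι] {M : Type*} [AddCommMonoid M]
    (g : ι → κ → M) : ∑ p ∈ L, g p.1 p.2 = ∑ i, ∑ m, g i (finRowEquiv L i m) := by
  rw [← sum_fiberwise L Prod.fst]
  refine Fintype.sum_congr _ _ fun i => ?_
  rw [← sum_coe_sort, ← Equiv.sum_comp (L.filter _).equivFin.symm]
  refine Fintype.sum_congr _ _ fun m => ?_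
  obtain ⟨-, h⟩ := mem_filter.1 ((L.filter _).equivFin.symm m).2
  rw [h]
  rfl

end Grid

def finSumFinEquivOfAddEq {a b c d : ℕ} (h : a + b = c + d) :
    Fin a ⊕ Fin b ≃ Fin c ⊕ Fin d :=
  finSumFinEquiv.trans ((finCongr h).trans finSumFinEquiv.symm)

lemma finSumFinEquivOfAddEq_inl {a b c d : ℕ} (h : a + b = c + d) (k : Fin a) (hk : k < c) :
    finSumFinEquivOfAddEq h (.inl k) = .inl ⟨k, hk⟩ := by
  rw [finSumFinEquivOfAddEq, Equiv.trans_apply, Equiv.trans_apply, Equiv.symm_apply_eq]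
  ext
  simp

lemma finSumFinEquivOfAddEq_inr {a b c d : ℕ} (h : a + b = c + d) (k : Fin b) (hca : c ≤ a) :
    finSumFinEquivOfAddEq h (.inr k) = .inr ⟨a + k - c, by omega⟩ := by
  rw [finSumFinEquivOfAddEq, Equiv.trans_apply, Equiv.trans_apply, Equiv.symm_apply_eq]
  ext
  simp
  omega

section Copies

variable {ι κ : Type*} [Fintype ι] [DecidableEq ι] [DecidableEq κ] (L : Finset (ι × κ))
  {r : ι → ℕ} {x : κ → ℕ} {Z : Type*} (Y : (Σ i, Fin (r i)) ⊕ (Σ j, Fin (x j)) ≃ Z)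

noncomputable def copiesEquiv :
    (Σ i, Fin (rowDeg L i) ⊕ Fin (r i)) ⊕
        (Σ j, Fin (x j) ⊕ Fin (Fintype.card ι - colDeg L j)) ≃ (κ × ι) ⊕ Z :=
  ((Equiv.sumCongr (Equiv.sigmaSumDistrib _ _)
      ((Equiv.sigmaSumDistrib _ _).trans (Equiv.sumComm _ _))).trans
    (Equiv.sumSumSumComm _ _ _ _)).trans (Equiv.sumCongr (cellEquiv L) Y)

lemma copiesEquiv_inl_inl (i : ι) (m : Fin (rowDeg L i)) :
    copiesEquiv L Y (.inl ⟨i, .inl m⟩) = .inl ((finRowEquiv L i m).1, i) := rfl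

lemma copiesEquiv_inl_inr (i : ι) (m : Fin (r i)) :
    copiesEquiv L Y (.inl ⟨i, .inr m⟩) = .inr (Y (.inl ⟨i, m⟩)) := rfl

lemma copiesEquiv_inr_inl (j : κ) (m : Fin (x j)) :
    copiesEquiv L Y (.inr ⟨j, .inl m⟩) = .inr (Y (.inr ⟨j, m⟩)) := rfl

lemma copiesEquiv_inr_inr (j : κ) (m : Fin (Fintype.card ι - colDeg L j)) :
    copiesEquiv L Y (.inr ⟨j, .inr m⟩) = .inl (j, (finColComplEquiv L j m).1) := rfl

end Copies

section Construction

variable {α α' : Fin s → ℕ} {β β' : Fin t → ℕ} {L : Finset (Fin s × Fin t)}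

lemma aCopies_split (hL : IsMMDC α α' β β' L) (i : Fin s) :
    α i + (α' i - α i) = rowDeg L i + (α' i - rowDeg L i) := by
  have : α i ≤ rowDeg L i ∧ rowDeg L i ≤ α' i := hL.1 i
  omega

lemma bCopies_split (hL : IsMMDC α α' β β' L) (hβ's : ∀ j, β' j ≤ s) (j : Fin t) :
    (β' j - β j) + (s - β' j) = (colDeg L j - β j) + (Fintype.card (Fin s) - colDeg L j) := by
  have : β j ≤ colDeg L j ∧ colDeg L j ≤ β' j := hL.2 j
  have := hβ's j
  rw [Fintype.card_fin]
  omega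

lemma card_slack (hL : IsMMDC α α' β β' L) :
    Fintype.card ((Σ i, Fin (α' i - rowDeg L i)) ⊕ (Σ j, Fin (colDeg L j - β j))) =
      ∑ i, α' i - ∑ j, β j := by
  have hα : ∀ i, rowDeg L i ≤ α' i := fun i => (hL.1 i).2
  have hβ : ∀ j, β j ≤ colDeg L j := fun j => (hL.2 j).1
  have h₁ := sum_le_sum fun i (_ : i ∈ univ) => hα i
  have h₂ := sum_le_sum fun j (_ : j ∈ univ) => hβ j
  simp only [Fintype.card_sum, Fintype.card_sigma, Fintype.card_fin]
  rw [sum_tsub_distrib _ fun i _ => hα i, sum_tsub_distrib _ fun j _ => hβ j]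
  rw [sum_rowDeg] at h₁ ⊢
  rw [sum_colDeg] at h₂ ⊢
  omega

noncomputable def slackEquiv (hL : IsMMDC α α' β β' L) :
    (Σ i, Fin (α' i - rowDeg L i)) ⊕ (Σ j, Fin (colDeg L j - β j)) ≃
      Fin (∑ i, α' i - ∑ j, β j) :=
  Fintype.equivFinOfCardEq (card_slack hL)

noncomputable def perfectMatchingOf (hL : IsMMDC α α' β β' L) (hβ's : ∀ j, β' j ≤ s) :
    VS s t α α' β β' ≃ VT s t α' β :=
  (((Equiv.sumAssoc _ _ _).symm.trans
      (Equiv.sumCongr (Equiv.sigmaSumDistrib _ _).symm (Equiv.sigmaSumDistrib _ _).symm)).trans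
    (Equiv.sumCongr (Equiv.sigmaCongrRight fun i => finSumFinEquivOfAddEq (aCopies_split hL i))
      (Equiv.sigmaCongrRight fun j => finSumFinEquivOfAddEq (bCopies_split hL hβ's j)))).trans
  (copiesEquiv L (slackEquiv hL))

def aCopy (i : Fin s) : Fin (α i) ⊕ Fin (α' i - α i) → VS s t α α' β β' :=
  Sum.elim (fun k => .inl ⟨i, k⟩) (fun k => .inr (.inl ⟨i, k⟩))

def rowWeight (δ : Fin s → Fin t → ℝ) (i : Fin s) : VT s t α' β → ℝ
  | .inl (j, i') => if i' = i then δ i j else 0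
  | .inr _ => 0

lemma mainWeight_eq_sum_rowWeight (δ : Fin s → Fin t → ℝ)
    (f : VS s t α α' β β' ≃ VT s t α' β) :
    mainWeight δ α α' β β' f = ∑ i, ∑ x, rowWeight δ i (f (aCopy i x)) := by
  rw [mainWeight, Fintype.sum_sigma, Fintype.sum_sigma, ← sum_add_distrib]
  refine Fintype.sum_congr _ _ fun i => ?_
  rw [Fintype.sum_sum_type]
  rfl

variable (hL : IsMMDC α α' β β' L) (hβ's : ∀ j, β' j ≤ s)

lemma perfectMatchingOf_inl (i : Fin s) (k : Fin (α i)) :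
    perfectMatchingOf hL hβ's (.inl ⟨i, k⟩) =
      copiesEquiv L (slackEquiv hL)
        (.inl ⟨i, finSumFinEquivOfAddEq (aCopies_split hL i) (.inl k)⟩) := rfl

lemma perfectMatchingOf_inr_inl (i : Fin s) (k : Fin (α' i - α i)) :
    perfectMatchingOf hL hβ's (.inr (.inl ⟨i, k⟩)) =
      copiesEquiv L (slackEquiv hL)
        (.inl ⟨i, finSumFinEquivOfAddEq (aCopies_split hL i) (.inr k)⟩) := rfl

lemma perfectMatchingOf_inr_inr_inl (j : Fin t) (k : Fin (β' j - β j)) :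
    perfectMatchingOf hL hβ's (.inr (.inr (.inl ⟨j, k⟩))) =
      copiesEquiv L (slackEquiv hL)
        (.inr ⟨j, finSumFinEquivOfAddEq (bCopies_split hL hβ's j) (.inl k)⟩) := rfl

lemma perfectMatchingOf_inr_inr_inr (j : Fin t) (k : Fin (s - β' j)) :
    perfectMatchingOf hL hβ's (.inr (.inr (.inr ⟨j, k⟩))) =
      copiesEquiv L (slackEquiv hL)
        (.inr ⟨j, finSumFinEquivOfAddEq (bCopies_split hL hβ's j) (.inr k)⟩) := rfl

theorem isPerfectMatching_perfectMatchingOf :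
    IsPerfectMatching α α' β β' (perfectMatchingOf hL hβ's) := by
  rintro (⟨i, k⟩ | ⟨i, k⟩ | ⟨j, k⟩ | ⟨j, k⟩)
  · have : α i ≤ rowDeg L i := (hL.1 i).1
    rw [perfectMatchingOf_inl, finSumFinEquivOfAddEq_inl _ k (by omega), copiesEquiv_inl_inl]
    exact rfl
  · rw [perfectMatchingOf_inr_inl]
    rcases finSumFinEquivOfAddEq (aCopies_split hL i) (.inr k) with m | m
    exacts [rfl, trivial]
  · rw [perfectMatchingOf_inr_inr_inl]
    rcases finSumFinEquivOfAddEq (bCopies_split hL hβ's j) (.inl k) with m | m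
    exacts [trivial, rfl]
  · have : colDeg L j ≤ β' j := (hL.2 j).2
    rw [perfectMatchingOf_inr_inr_inr, finSumFinEquivOfAddEq_inr _ k (by omega),
      copiesEquiv_inr_inr]
    exact rfl

lemma perfectMatchingOf_aCopy (i : Fin s) (x : Fin (α i) ⊕ Fin (α' i - α i)) :
    perfectMatchingOf hL hβ's (aCopy i x) =
      copiesEquiv L (slackEquiv hL)
        (.inl ⟨i, finSumFinEquivOfAddEq (aCopies_split hL i) x⟩) := by
  cases x <;> rfl

theorem mainWeight_perfectMatchingOf (δ : Fin s → Fin t → ℝ) :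
    mainWeight δ α α' β β' (perfectMatchingOf hL hβ's) = cost δ L := by
  rw [mainWeight_eq_sum_rowWeight, cost, sum_eq_sum_finRowEquiv L δ]
  refine Fintype.sum_congr _ _ fun i => ?_
  simp only [perfectMatchingOf_aCopy]
  rw [Equiv.sum_comp (finSumFinEquivOfAddEq _)
    fun y => rowWeight δ i (copiesEquiv L (slackEquiv hL) (.inl ⟨i, y⟩)), Fintype.sum_sum_type]
  simp [copiesEquiv_inl_inl, copiesEquiv_inl_inr, rowWeight]

end Construction

end MMDC

theorem exists_perfectMatching_mainWeight_eq_cost_general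
    (s t : ℕ)
    (δ : Fin s → Fin t → ℝ) (α α' : Fin s → ℕ) (β β' : Fin t → ℕ)
    (hβ's : ∀ j, β' j ≤ s)
    (L : Finset (Fin s × Fin t)) (hL : IsMMDC α α' β β' L) :
    ∃ f : VS s t α α' β β' ≃ VT s t α' β,
      IsPerfectMatching α α' β β' f ∧ mainWeight δ α α' β β' f = cost δ L :=
  ⟨MMDC.perfectMatchingOf hL hβ's, MMDC.isPerfectMatching_perfectMatchingOf hL hβ's,
    MMDC.mainWeight_perfectMatchingOf hL hβ's δ⟩

/-- For every MMDC matching `L` there is a perfect matching `f` of `G`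
with `w_main(f) = c(L)`. -/
theorem exists_perfectMatching_mainWeight_eq_cost
    (s t : ℕ) (hs : 0 < s) (ht : 0 < t)
    (δ : Fin s → Fin t → ℝ) (α α' : Fin s → ℕ) (β β' : Fin t → ℕ)
    (hαα' : ∀ i, α i ≤ α' i) (hα't : ∀ i, α' i ≤ t)
    (hββ' : ∀ j, β j ≤ β' j) (hβ's : ∀ j, β' j ≤ s)
    (hbal : ∑ j, β j < ∑ i, α' i)
    (γ' γ'' : ℝ) (hγ : γ' < γ'') (hγδ : ∀ i j, γ'' < δ i j)
    (L : Finset (Fin s × Fin t)) (hL : IsMMDC α α' β β' L) :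
    ∃ f : VS s t α α' β β' ≃ VT s t α' β,
      IsPerfectMatching α α' β β' f ∧ mainWeight δ α α' β β' f = cost δ L :=
  exists_perfectMatching_mainWeight_eq_cost_general s t δ α α' β β' hβ's L hL
end

section
/- For every perfect matching f of G and every i ∈ Fin s, the number of indices j ∈ Fin t such that some vertex of A_i ∪ A'_i (a copy of a_i) is mapped by f to the vertex b_{j,i} is at least α i and at most α' i. -/
variable {s t : ℕ}

/-! The copies of `aᵢ` in `A_i` must go to vertices `b_{j,i}` (they have no edge to `Y`), and
distinct copies go to distinct vertices, so at least `α i` columns `j` are hit. Conversely each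
of the `α' i` copies in `A_i ∪ A'_i` hits at most one column. -/

theorem Nat.card_subtype_exists_le_of_functional {K J : Type*} [Finite K] {R : K → J → Prop}
    (hR : ∀ k j j', R k j → R k j' → j = j') :
    Nat.card {j // ∃ k, R k j} ≤ Nat.card K :=
  Nat.card_le_card_of_injective (fun j => j.2.choose) fun j j' h =>
    Subtype.ext <| hR _ _ _ j.2.choose_spec (by simpa only [h] using j'.2.choose_spec)

theorem Nat.card_le_card_subtype_exists_of_injective {K J : Type*} [Finite J]
    {R : K → J → Prop} (htotal : ∀ k, ∃ j, R k j) (hinj : ∀ k k' j, R k j → R k' j → k = k') :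
    Nat.card K ≤ Nat.card {j // ∃ k, R k j} :=
  Nat.card_le_card_of_injective (fun k => ⟨(htotal k).choose, k, (htotal k).choose_spec⟩)
    fun k k' h => by
      have hc : (htotal k).choose = (htotal k').choose := congrArg Subtype.val h
      exact hinj _ _ _ (htotal k).choose_spec (hc ▸ (htotal k').choose_spec)

theorem Nat.card_subtype_le_of_imp {J : Type*} [Finite J] {p q : J → Prop} (h : ∀ j, p j → q j) :
    Nat.card {j // p j} ≤ Nat.card {j // q j} :=
  Nat.card_le_card_of_injective (Subtype.impEmbedding p q h) (Subtype.impEmbedding p q h).injective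

theorem IsPerfectMatching.exists_apply_inl {α α' : Fin s → ℕ} {β β' : Fin t → ℕ}
    {f : VS s t α α' β β' ≃ VT s t α' β} (hf : IsPerfectMatching α α' β β' f) (i : Fin s)
    (k : Fin (α i)) : ∃ j, f (Sum.inl ⟨i, k⟩) = Sum.inl (j, i) := by
  have h := hf (Sum.inl ⟨i, k⟩)
  rcases hv : f (Sum.inl ⟨i, k⟩) with ⟨j, i'⟩ | _ <;> rw [hv] at h
  · exact ⟨j, by rw [show i' = i from h]⟩
  · exact h.elim

theorem demand_capacity_A_satisfied_general
    (s t : ℕ)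
    (α α' : Fin s → ℕ) (β β' : Fin t → ℕ)
    (hαα' : ∀ i, α i ≤ α' i)
    (f : VS s t α α' β β' ≃ VT s t α' β)
    (hf : IsPerfectMatching α α' β β' f) (i : Fin s) :
    α i ≤ Nat.card {j : Fin t //
        (∃ k, f (Sum.inl ⟨i, k⟩) = Sum.inl (j, i)) ∨
        (∃ k, f (Sum.inr (Sum.inl ⟨i, k⟩)) = Sum.inl (j, i))} ∧
    Nat.card {j : Fin t //
        (∃ k, f (Sum.inl ⟨i, k⟩) = Sum.inl (j, i)) ∨
        (∃ k, f (Sum.inr (Sum.inl ⟨i, k⟩)) = Sum.inl (j, i))} ≤ α' i := by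
  let copy : Fin (α i) ⊕ Fin (α' i - α i) → VS s t α α' β β' :=
    Sum.elim (fun k => Sum.inl ⟨i, k⟩) (fun k => Sum.inr (Sum.inl ⟨i, k⟩))
  have hcopy : ∀ j, ((∃ k, f (Sum.inl ⟨i, k⟩) = Sum.inl (j, i)) ∨
      (∃ k, f (Sum.inr (Sum.inl ⟨i, k⟩)) = Sum.inl (j, i))) ↔
      ∃ k, f (copy k) = Sum.inl (j, i) :=
    fun j => (Sum.exists (p := fun k => f (copy k) = Sum.inl (j, i))).symm
  constructor
  · calc α i = Nat.card (Fin (α i)) := (Nat.card_fin _).symm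
      _ ≤ Nat.card {j // ∃ k, f (Sum.inl ⟨i, k⟩) = Sum.inl (j, i)} :=
        Nat.card_le_card_subtype_exists_of_injective (hf.exists_apply_inl i)
          fun k k' j hk hk' => by simpa using f.injective (hk.trans hk'.symm)
      _ ≤ _ := Nat.card_subtype_le_of_imp fun j => Or.inl
  · calc _ = Nat.card {j // ∃ k, f (copy k) = Sum.inl (j, i)} :=
          Nat.card_congr (Equiv.subtypeEquivRight hcopy)
      _ ≤ Nat.card (Fin (α i) ⊕ Fin (α' i - α i)) :=
        Nat.card_subtype_exists_le_of_functional fun k j j' hj hj' => by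
          simpa using hj.symm.trans hj'
      _ = α' i := by simp [Nat.add_sub_cancel' (hαα' i)]

/-- For every perfect matching `f` of `G` and every `i`, the number of
indices `j` such that some copy of `aᵢ` (in `A_i ∪ A'_i`) is mapped by `f` to `b_{j,i}`
is at least `α i` and at most `α' i`. -/
theorem demand_capacity_A_satisfied
    (s t : ℕ) (hs : 0 < s) (ht : 0 < t)
    (δ : Fin s → Fin t → ℝ) (α α' : Fin s → ℕ) (β β' : Fin t → ℕ)
    (hαα' : ∀ i, α i ≤ α' i) (hα't : ∀ i, α' i ≤ t)
    (hββ' : ∀ j, β j ≤ β' j) (hβ's : ∀ j, β' j ≤ s)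
    (hbal : ∑ j, β j < ∑ i, α' i)
    (γ' γ'' : ℝ) (hγ : γ' < γ'') (hγδ : ∀ i j, γ'' < δ i j)
    (f : VS s t α α' β β' ≃ VT s t α' β)
    (hf : IsPerfectMatching α α' β β' f) (i : Fin s) :
    α i ≤ Nat.card {j : Fin t //
        (∃ k, f (Sum.inl ⟨i, k⟩) = Sum.inl (j, i)) ∨
        (∃ k, f (Sum.inr (Sum.inl ⟨i, k⟩)) = Sum.inl (j, i))} ∧
    Nat.card {j : Fin t //
        (∃ k, f (Sum.inl ⟨i, k⟩) = Sum.inl (j, i)) ∨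
        (∃ k, f (Sum.inr (Sum.inl ⟨i, k⟩)) = Sum.inl (j, i))} ≤ α' i :=
  demand_capacity_A_satisfied_general s t α α' β β' hαα' f hf i
end

section
/- For every perfect matching f of G and every j ∈ Fin t, the number of indices i ∈ Fin s such that some vertex of A_i ∪ A'_i (a copy of a_i) is mapped by f to the vertex b_{j,i} is at least β j and at most β' j. -/
variable {s t : ℕ}

/-
The vertices `b_{j,i}` (`i : Fin s`) of the `j`-th column are matched to exactly `s` distinct
vertices of `V_S`, and the edges of `G` force each of them to be a copy of `a_i`, a vertex of
`X_j`, or a vertex of `W_j`. All `s - β' j` vertices of `W_j` land in the column and at most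
`β' j - β j` vertices of `X_j` do, so the number of copies lies between
`s - (β' j - β j) - (s - β' j) = β j` and `s - (s - β' j) = β' j`.
-/

open Finset

section Column

variable {κ : Type*} [DecidableEq κ] (j : Fin t)

def columnHits (T : Finset (Fin t × Fin s ⊕ κ)) : Finset (Fin s) :=
  {i | Sum.inl (j, i) ∈ T}

theorem columnHits_union (T T' : Finset (Fin t × Fin s ⊕ κ)) :
    columnHits j (T ∪ T') = columnHits j T ∪ columnHits j T' := by
  ext i
  simp [columnHits]

theorem columnHits_mono {T T' : Finset (Fin t × Fin s ⊕ κ)} (h : T ⊆ T') :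
    columnHits j T ⊆ columnHits j T' :=
  fun _ hi => mem_filter.2 ⟨mem_univ _, h (mem_filter.1 hi).2⟩

theorem card_columnHits_le (T : Finset (Fin t × Fin s ⊕ κ)) : #(columnHits j T) ≤ #T :=
  card_le_card_of_injOn (fun i => Sum.inl (j, i)) (fun _ hi => (mem_filter.1 hi).2)
    (fun _ _ _ _ h => by simpa using h)

theorem card_columnHits_of_subset {T : Finset (Fin t × Fin s ⊕ κ)}
    (hT : ∀ w ∈ T, ∃ i, w = Sum.inl (j, i)) : #(columnHits j T) = #T := by
  refine le_antisymm (card_columnHits_le j T)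
    (card_le_card_of_surjOn (fun i => Sum.inl (j, i)) ?_)
  intro w hw
  obtain ⟨i, rfl⟩ := hT w hw
  exact ⟨i, mem_filter.2 ⟨mem_univ _, hw⟩, rfl⟩

end Column

section Matching

variable {α α' : Fin s → ℕ} {β β' : Fin t → ℕ} (f : VS s t α α' β β' ≃ VT s t α' β) (j : Fin t)

def xImage : Finset (VT s t α' β) :=
  univ.image fun k : Fin (β' j - β j) => f (.inr (.inr (.inl ⟨j, k⟩)))

def wImage : Finset (VT s t α' β) :=
  univ.image fun k : Fin (s - β' j) => f (.inr (.inr (.inr ⟨j, k⟩)))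

def IsMatchedToCopy (i : Fin s) : Prop :=
  (∃ k, f (.inl ⟨i, k⟩) = .inl (j, i)) ∨ (∃ k, f (.inr (.inl ⟨i, k⟩)) = .inl (j, i))

theorem card_xImage_le : #(xImage f j) ≤ β' j - β j :=
  card_image_le.trans (by simp)

theorem card_wImage : #(wImage f j) = s - β' j := by
  rw [wImage, card_image_of_injective _ (fun k k' h => by simpa using f.injective h)]
  simp

variable {f}

theorem wImage_subset_column (hf : IsPerfectMatching α α' β β' f) :
    ∀ w ∈ wImage f j, ∃ i, w = Sum.inl (j, i) := by
  simp only [wImage, mem_image, mem_univ, true_and, forall_exists_index, forall_apply_eq_imp_iff]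
  intro k
  have h := hf (.inr (.inr (.inr ⟨j, k⟩)))
  rcases hw : f (.inr (.inr (.inr ⟨j, k⟩))) with ⟨j', i⟩ | y <;> rw [hw] at h
  · exact ⟨i, by rw [show j' = j from h]⟩
  · exact h.elim

theorem isMatchedToCopy_or_mem_xImage_union_wImage (hf : IsPerfectMatching α α' β β' f)
    (i : Fin s) :
    IsMatchedToCopy f j i ∨ Sum.inl (j, i) ∈ xImage f j ∪ wImage f j := by
  have hv := f.apply_symm_apply (.inl (j, i))
  have h := hf (f.symm (.inl (j, i)))
  rw [hv] at h
  rcases hs : f.symm (.inl (j, i)) with ⟨i', k⟩ | ⟨i', k⟩ | ⟨j', k⟩ | ⟨j', k⟩ <;>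
    rw [hs] at h hv <;> cases h
  · exact .inl (.inl ⟨k, hv⟩)
  · exact .inl (.inr ⟨k, hv⟩)
  · exact .inr (mem_union_left _ (mem_image.2 ⟨k, mem_univ _, hv⟩))
  · exact .inr (mem_union_right _ (mem_image.2 ⟨k, mem_univ _, hv⟩))

theorem notMem_xImage_union_wImage_of_isMatchedToCopy {i : Fin s} (h : IsMatchedToCopy f j i) :
    Sum.inl (j, i) ∉ xImage f j ∪ wImage f j := by
  simp only [mem_union, xImage, wImage, mem_image, mem_univ, true_and, not_or, not_exists]
  rcases h with ⟨k, hk⟩ | ⟨k, hk⟩ <;>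
    exact ⟨fun k' h' => by simpa using f.injective (h'.trans hk.symm),
      fun k' h' => by simpa using f.injective (h'.trans hk.symm)⟩

theorem card_isMatchedToCopy (hf : IsPerfectMatching α α' β β' f) :
    Nat.card {i // IsMatchedToCopy f j i} = s - #(columnHits j (xImage f j ∪ wImage f j)) := by
  classical
  have hcompl : ({i | IsMatchedToCopy f j i} : Finset (Fin s)) =
      (columnHits j (xImage f j ∪ wImage f j))ᶜ := by
    ext i
    simp only [columnHits, mem_compl, mem_filter, mem_univ, true_and]
    exact ⟨notMem_xImage_union_wImage_of_isMatchedToCopy j,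
      (isMatchedToCopy_or_mem_xImage_union_wImage j hf i).resolve_right⟩
  rw [Nat.card_eq_fintype_card, Fintype.card_subtype, hcompl, card_compl, Fintype.card_fin]

end Matching

theorem demand_capacity_B_satisfied_general
    (s t : ℕ)
    (α α' : Fin s → ℕ) (β β' : Fin t → ℕ)
    (hββ' : ∀ j, β j ≤ β' j) (hβ's : ∀ j, β' j ≤ s)
    (f : VS s t α α' β β' ≃ VT s t α' β)
    (hf : IsPerfectMatching α α' β β' f) (j : Fin t) :
    β j ≤ Nat.card {i : Fin s //
        (∃ k, f (Sum.inl ⟨i, k⟩) = Sum.inl (j, i)) ∨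
        (∃ k, f (Sum.inr (Sum.inl ⟨i, k⟩)) = Sum.inl (j, i))} ∧
    Nat.card {i : Fin s //
        (∃ k, f (Sum.inl ⟨i, k⟩) = Sum.inl (j, i)) ∨
        (∃ k, f (Sum.inr (Sum.inl ⟨i, k⟩)) = Sum.inl (j, i))} ≤ β' j := by
  have hcount := card_isMatchedToCopy j hf
  have hX := (card_columnHits_le j (xImage f j)).trans (card_xImage_le f j)
  have hW : #(columnHits j (wImage f j)) = s - β' j :=
    (card_columnHits_of_subset j (wImage_subset_column j hf)).trans (card_wImage f j)
  have hunion : #(columnHits j (xImage f j ∪ wImage f j)) ≤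
      #(columnHits j (xImage f j)) + #(columnHits j (wImage f j)) := by
    rw [columnHits_union]
    exact card_union_le _ _
  have hmono : #(columnHits j (wImage f j)) ≤ #(columnHits j (xImage f j ∪ wImage f j)) :=
    card_le_card (columnHits_mono j subset_union_right)
  unfold IsMatchedToCopy at hcount
  have := hββ' j
  have := hβ's j
  omega

/-- For every perfect matching `f` of `G` and every `j`, the number of
indices `i` such that some copy of `aᵢ` (in `A_i ∪ A'_i`) is mapped by `f` to `b_{j,i}`
is at least `β j` and at most `β' j`. -/
theorem demand_capacity_B_satisfied
    (s t : ℕ) (hs : 0 < s) (ht : 0 < t)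
    (δ : Fin s → Fin t → ℝ) (α α' : Fin s → ℕ) (β β' : Fin t → ℕ)
    (hαα' : ∀ i, α i ≤ α' i) (hα't : ∀ i, α' i ≤ t)
    (hββ' : ∀ j, β j ≤ β' j) (hβ's : ∀ j, β' j ≤ s)
    (hbal : ∑ j, β j < ∑ i, α' i)
    (γ' γ'' : ℝ) (hγ : γ' < γ'') (hγδ : ∀ i j, γ'' < δ i j)
    (f : VS s t α α' β β' ≃ VT s t α' β)
    (hf : IsPerfectMatching α α' β β' f) (j : Fin t) :
    β j ≤ Nat.card {i : Fin s //
        (∃ k, f (Sum.inl ⟨i, k⟩) = Sum.inl (j, i)) ∨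
        (∃ k, f (Sum.inr (Sum.inl ⟨i, k⟩)) = Sum.inl (j, i))} ∧
    Nat.card {i : Fin s //
        (∃ k, f (Sum.inl ⟨i, k⟩) = Sum.inl (j, i)) ∨
        (∃ k, f (Sum.inr (Sum.inl ⟨i, k⟩)) = Sum.inl (j, i))} ≤ β' j :=
  demand_capacity_B_satisfied_general s t α α' β β' hββ' hβ's f hf j
end

section
/- Let f* be a perfect matching of G of minimum total weight among all perfect matchings of G. Then the induced set of pairs L' = {(i,j) ∈ Fin s × Fin t : some vertex of A_i ∪ A'_i is mapped by f* to b_{j,i}} is an MMDC matching between A and B, and its cost satisfies c(L') = w_main(f*). -/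
variable {s t : ℕ}

/-! Every `b_{j,i}` has exactly one partner `f⁻¹ b_{j,i}`, and `(i, j) ∈ L'` exactly when that
partner is a copy of `a_i`; so `c(L')` is `w_main(f)` reindexed through `f`. The copies of `a_i`
go to distinct vertices `b_{·,i}`, all `α i` copies in `A_i` are matched that way, and there are
`α' i` copies in all: this bounds the degree of `a_i`. The `s` vertices `b_{j,·}` are matched to
copies, to `X_j` (at most `β' j - β j` of them) or to `W_j` (exactly `s - β' j`, as `W_j` has no
other neighbours): this bounds the degree of `b_j`. -/

open Finset Function

section Counting

variable {ι κ V : Type*} [Fintype ι] [Fintype κ] [DecidableEq V] {g : ι → V}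

lemma card_filter_apply_mem_le (hg : Injective g) (S : Finset V) : #{i | g i ∈ S} ≤ #S :=
  card_le_card_of_injOn g (fun _ hi => (mem_filter.1 hi).2) hg.injOn

lemma card_filter_apply_mem_of_subset_range (hg : Injective g) {S : Finset V}
    (hS : ↑S ⊆ Set.range g) : #{i | g i ∈ S} = #S := by
  refine le_antisymm (card_filter_apply_mem_le hg S) (card_le_card_of_surjOn g fun v hv => ?_)
  obtain ⟨i, rfl⟩ := hS hv
  exact ⟨i, by simpa using hv, rfl⟩

variable (P : ι × κ → Prop) [DecidablePred P]

lemma card_filter_fst_eq [DecidableEq ι] (i : ι) :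
    #((univ.filter P).filter fun p => p.1 = i) = #{j | P (i, j)} := by
  rw [← card_map (Embedding.sectR i κ)]
  congr 1
  ext ⟨a, b⟩
  simp only [mem_map, mem_filter, mem_univ, true_and]
  aesop

lemma card_filter_snd_eq [DecidableEq κ] (j : κ) :
    #((univ.filter P).filter fun p => p.2 = j) = #{i | P (i, j)} := by
  rw [← card_map (Embedding.sectL ι j)]
  congr 1
  ext ⟨a, b⟩
  simp only [mem_map, mem_filter, mem_univ, true_and]
  aesop

end Counting

section Graph

variable {α α' : Fin s → ℕ} {β β' : Fin t → ℕ}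

-- Instance search fails to find this under a binder, e.g. in the predicate of `inducedPairs`.
instance : DecidableEq (VS s t α α' β β') := inferInstance

-- The paper's `A_i`, `A'_i`, `X_j` and `W_j`, as subsets of `V_S`.

def copies (i : Fin s) : Finset (VS s t α α' β β') :=
  univ.map ((Embedding.sigmaMk i).trans Embedding.inl)

def extraCopies (i : Fin s) : Finset (VS s t α α' β β') :=
  univ.map ((Embedding.sigmaMk i).trans (Embedding.inl.trans Embedding.inr))

def allCopies (i : Fin s) : Finset (VS s t α α' β β') :=
  copies i ∪ extraCopies i

def xDummies (j : Fin t) : Finset (VS s t α α' β β') :=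
  univ.map ((Embedding.sigmaMk j).trans (Embedding.inl.trans (Embedding.inr.trans Embedding.inr)))

def wDummies (j : Fin t) : Finset (VS s t α α' β β') :=
  univ.map ((Embedding.sigmaMk j).trans (Embedding.inr.trans (Embedding.inr.trans Embedding.inr)))

@[simp] lemma card_copies (i : Fin s) : #(copies i : Finset (VS s t α α' β β')) = α i := by
  simp [copies]

lemma card_allCopies {i : Fin s} (h : α i ≤ α' i) :
    #(allCopies i : Finset (VS s t α α' β β')) = α' i := by
  rw [allCopies, card_union_of_disjoint (by simp [disjoint_left, copies, extraCopies])]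
  simp [extraCopies]
  omega

@[simp] lemma card_xDummies (j : Fin t) :
    #(xDummies j : Finset (VS s t α α' β β')) = β' j - β j := by
  simp [xDummies]

@[simp] lemma card_wDummies (j : Fin t) :
    #(wDummies j : Finset (VS s t α α' β β')) = s - β' j := by
  simp [wDummies]

@[simp] lemma inl_mem_allCopies {a : (i : Fin s) × Fin (α i)} {i : Fin s} :
    (.inl a : VS s t α α' β β') ∈ allCopies i ↔ i = a.1 := by
  obtain ⟨i', k⟩ := a
  constructor
  · simp +contextual [allCopies, copies, extraCopies]
  · rintro rfl
    simp [allCopies, copies]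

@[simp] lemma inr_inl_mem_allCopies {a : (i : Fin s) × Fin (α' i - α i)} {i : Fin s} :
    (.inr (.inl a) : VS s t α α' β β') ∈ allCopies i ↔ i = a.1 := by
  obtain ⟨i', k⟩ := a
  constructor
  · simp +contextual [allCopies, copies, extraCopies]
  · rintro rfl
    simp [allCopies, extraCopies]

@[simp] lemma inr_inr_not_mem_allCopies {v} {i : Fin s} :
    (.inr (.inr v) : VS s t α α' β β') ∉ allCopies i := by
  simp [allCopies, copies, extraCopies]

lemma not_mem_allCopies_of_mem_dummies {v : VS s t α α' β β'} {i : Fin s} {j : Fin t}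
    (hv : v ∈ xDummies j ∪ wDummies j) : v ∉ allCopies i := by
  simp only [mem_union, xDummies, wDummies, mem_map] at hv
  rcases hv with ⟨_, _, rfl⟩ | ⟨_, _, rfl⟩ <;> exact inr_inr_not_mem_allCopies

lemma mem_allCopies_or_mem_dummies_of_allowed {v : VS s t α α' β β'} {j : Fin t} {i : Fin s}
    (h : Allowed α α' β β' v (.inl (j, i))) :
    v ∈ allCopies i ∨ v ∈ xDummies j ∪ wDummies j := by
  rcases v with ⟨i', k⟩ | ⟨i', k⟩ | ⟨j', k⟩ | ⟨j', k⟩ <;> cases h <;>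
    simp [allCopies, copies, extraCopies, xDummies, wDummies]

lemma exists_eq_inl_of_allowed_of_mem_copies {v : VS s t α α' β β'} {w : VT s t α' β}
    {i : Fin s} (hv : v ∈ copies i) (h : Allowed α α' β β' v w) : ∃ j, w = .inl (j, i) := by
  simp only [copies, mem_map] at hv
  obtain ⟨k, -, rfl⟩ := hv
  rcases w with ⟨j, i'⟩ | y
  · cases h
    exact ⟨j, rfl⟩
  · exact h.elim

lemma exists_eq_inl_of_allowed_of_mem_wDummies {v : VS s t α α' β β'} {w : VT s t α' β}
    {j : Fin t} (hv : v ∈ wDummies j) (h : Allowed α α' β β' v w) :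
    ∃ i, w = .inl (j, i) := by
  simp only [wDummies, mem_map] at hv
  obtain ⟨k, -, rfl⟩ := hv
  rcases w with ⟨j', i⟩ | y
  · cases h
    exact ⟨i, rfl⟩
  · exact h.elim

variable (f : VS s t α α' β β' ≃ VT s t α' β)

def inducedPairs : Finset (Fin s × Fin t) :=
  {p : Fin s × Fin t | f.symm (.inl (p.2, p.1)) ∈ allCopies p.1}

lemma inducedPairs_eq :
    (univ.filter fun p : Fin s × Fin t =>
      (∃ k, f (Sum.inl ⟨p.1, k⟩) = Sum.inl (p.2, p.1)) ∨
      (∃ k, f (Sum.inr (Sum.inl ⟨p.1, k⟩)) = Sum.inl (p.2, p.1))) = inducedPairs f := by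
  ext p
  simp [inducedPairs, allCopies, copies, extraCopies, Equiv.eq_symm_apply]

def mainEdgeWeight (δ : Fin s → Fin t → ℝ) (v : VS s t α α' β β') : VT s t α' β → ℝ
  | .inl (j, i) => if v ∈ allCopies i then δ i j else 0
  | .inr _ => 0

@[simp] lemma mainEdgeWeight_inr_inr (δ : Fin s → Fin t → ℝ) (v) (w : VT s t α' β) :
    mainEdgeWeight δ (.inr (.inr v) : VS s t α α' β β') w = 0 := by
  rcases w with ⟨j, i⟩ | y <;> simp [mainEdgeWeight]

lemma mainWeight_eq_sum_mainEdgeWeight (δ : Fin s → Fin t → ℝ) :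
    mainWeight δ α α' β β' f = ∑ v, mainEdgeWeight δ v (f v) := by
  simp only [mainWeight, Fintype.sum_sum_type, mainEdgeWeight_inr_inr, sum_const_zero, add_zero]
  congr 1 <;> refine sum_congr rfl fun v _ => ?_ <;> split <;> rename_i hv <;>
    simp only [hv, mainEdgeWeight, inl_mem_allCopies, inr_inl_mem_allCopies] <;>
    split_ifs with h <;> simp only [h]

lemma cost_inducedPairs (δ : Fin s → Fin t → ℝ) :
    cost δ (inducedPairs f) = mainWeight δ α α' β β' f := by
  rw [mainWeight_eq_sum_mainEdgeWeight, ← f.symm.sum_comp]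
  simp only [Equiv.apply_symm_apply, Fintype.sum_sum_type, mainEdgeWeight, sum_const_zero, add_zero]
  rw [cost, inducedPairs, sum_filter, ← (Equiv.prodComm _ _).sum_comp]
  rfl

variable {f}

lemma IsPerfectMatching.allowed_symm (hf : IsPerfectMatching α α' β β' f) (w : VT s t α' β) :
    Allowed α α' β β' (f.symm w) w := by
  simpa using hf (f.symm w)

lemma IsPerfectMatching.inducedDegree_left_bounds (hf : IsPerfectMatching α α' β β' f)
    {i : Fin s} (h : α i ≤ α' i) :
    α i ≤ #{j | f.symm (.inl (j, i)) ∈ allCopies i} ∧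
      #{j | f.symm (.inl (j, i)) ∈ allCopies i} ≤ α' i := by
  have hg : Injective fun j : Fin t => f.symm (.inl (j, i)) :=
    f.symm.injective.comp (Sum.inl_injective.comp (Prod.mk_left_injective i))
  constructor
  · calc α i = #{j | f.symm (.inl (j, i)) ∈ copies i} := by
          rw [card_filter_apply_mem_of_subset_range hg, card_copies]
          intro v hv
          obtain ⟨j, hj⟩ := exists_eq_inl_of_allowed_of_mem_copies hv (hf v)
          exact ⟨j, by simp [← hj]⟩
      _ ≤ _ := card_le_card (monotone_filter_right _ fun _ _ => mem_union_left _)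
  · exact (card_filter_apply_mem_le hg _).trans (card_allCopies h).le

lemma IsPerfectMatching.inducedDegree_right_bounds (hf : IsPerfectMatching α α' β β' f)
    {j : Fin t} (h₁ : β j ≤ β' j) (h₂ : β' j ≤ s) :
    β j ≤ #{i | f.symm (.inl (j, i)) ∈ allCopies i} ∧
      #{i | f.symm (.inl (j, i)) ∈ allCopies i} ≤ β' j := by
  have hg : Injective fun i : Fin s => f.symm (.inl (j, i)) :=
    f.symm.injective.comp (Sum.inl_injective.comp (Prod.mk_right_injective j))
  have hdummy (i : Fin s) : f.symm (.inl (j, i)) ∉ allCopies i ↔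
      f.symm (.inl (j, i)) ∈ xDummies j ∪ wDummies j :=
    ⟨(mem_allCopies_or_mem_dummies_of_allowed (hf.allowed_symm _)).resolve_left,
      not_mem_allCopies_of_mem_dummies⟩
  have hsplit : #{i | f.symm (.inl (j, i)) ∈ allCopies i} +
      #{i | f.symm (.inl (j, i)) ∈ xDummies j ∪ wDummies j} = s := by
    simp_rw [← hdummy]
    rw [card_filter_add_card_filter_not, card_univ, Fintype.card_fin]
  have hW : #{i | f.symm (.inl (j, i)) ∈ wDummies j} = s - β' j := by
    rw [card_filter_apply_mem_of_subset_range hg, card_wDummies]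
    intro v hv
    obtain ⟨i, hi⟩ := exists_eq_inl_of_allowed_of_mem_wDummies hv (hf v)
    exact ⟨i, by simp [← hi]⟩
  have hW_le : #{i | f.symm (.inl (j, i)) ∈ wDummies j} ≤
      #{i | f.symm (.inl (j, i)) ∈ xDummies j ∪ wDummies j} :=
    card_le_card (monotone_filter_right _ fun _ _ => mem_union_right _)
  have hXW_le : #{i | f.symm (.inl (j, i)) ∈ xDummies j ∪ wDummies j} ≤
      (β' j - β j) + (s - β' j) :=
    (card_filter_apply_mem_le hg _).trans ((card_union_le _ _).trans (by simp))
  omega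

lemma IsPerfectMatching.isMMDC_inducedPairs (hf : IsPerfectMatching α α' β β' f)
    (hαα' : ∀ i, α i ≤ α' i) (hββ' : ∀ j, β j ≤ β' j) (hβ's : ∀ j, β' j ≤ s) :
    IsMMDC α α' β β' (inducedPairs f) :=
  ⟨fun i => by
      rw [inducedPairs, card_filter_fst_eq]
      exact hf.inducedDegree_left_bounds (hαα' i),
    fun j => by
      rw [inducedPairs, card_filter_snd_eq]
      exact hf.inducedDegree_right_bounds (hββ' j) (hβ's j)⟩

end Graph

theorem induced_is_MMDC_and_cost_eq_mainWeight_general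
    (s t : ℕ)
    (δ : Fin s → Fin t → ℝ) (α α' : Fin s → ℕ) (β β' : Fin t → ℕ)
    (hαα' : ∀ i, α i ≤ α' i)
    (hββ' : ∀ j, β j ≤ β' j) (hβ's : ∀ j, β' j ≤ s)
    (f : VS s t α α' β β' ≃ VT s t α' β)
    (hf : IsPerfectMatching α α' β β' f) :
    IsMMDC α α' β β'
      (Finset.univ.filter fun p : Fin s × Fin t =>
        (∃ k, f (Sum.inl ⟨p.1, k⟩) = Sum.inl (p.2, p.1)) ∨
        (∃ k, f (Sum.inr (Sum.inl ⟨p.1, k⟩)) = Sum.inl (p.2, p.1))) ∧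
    cost δ
      (Finset.univ.filter fun p : Fin s × Fin t =>
        (∃ k, f (Sum.inl ⟨p.1, k⟩) = Sum.inl (p.2, p.1)) ∨
        (∃ k, f (Sum.inr (Sum.inl ⟨p.1, k⟩)) = Sum.inl (p.2, p.1)))
      = mainWeight δ α α' β β' f := by
  rw [inducedPairs_eq]
  exact ⟨hf.isMMDC_inducedPairs hαα' hββ' hβ's, cost_inducedPairs f δ⟩

/-- **Lemma 2, first part.** The set of pairs induced by a minimum-weight
perfect matching of `G` is an MMDC matching whose cost equals the main weight of the
matching. -/
theorem induced_is_MMDC_and_cost_eq_mainWeight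
    (s t : ℕ) (hs : 0 < s) (ht : 0 < t)
    (δ : Fin s → Fin t → ℝ) (α α' : Fin s → ℕ) (β β' : Fin t → ℕ)
    (hαα' : ∀ i, α i ≤ α' i) (hα't : ∀ i, α' i ≤ t)
    (hββ' : ∀ j, β j ≤ β' j) (hβ's : ∀ j, β' j ≤ s)
    (hbal : ∑ j, β j < ∑ i, α' i)
    (γ' γ'' : ℝ) (hγ : γ' < γ'') (hγδ : ∀ i j, γ'' < δ i j)
    (f : VS s t α α' β β' ≃ VT s t α' β)
    (hf : IsPerfectMatching α α' β β' f)
    (hfmin : ∀ g : VS s t α α' β β' ≃ VT s t α' β, IsPerfectMatching α α' β β' g →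
      totalWeight δ γ' γ'' α α' β β' f ≤ totalWeight δ γ' γ'' α α' β β' g) :
    IsMMDC α α' β β'
      (Finset.univ.filter fun p : Fin s × Fin t =>
        (∃ k, f (Sum.inl ⟨p.1, k⟩) = Sum.inl (p.2, p.1)) ∨
        (∃ k, f (Sum.inr (Sum.inl ⟨p.1, k⟩)) = Sum.inl (p.2, p.1))) ∧
    cost δ
      (Finset.univ.filter fun p : Fin s × Fin t =>
        (∃ k, f (Sum.inl ⟨p.1, k⟩) = Sum.inl (p.2, p.1)) ∨
        (∃ k, f (Sum.inr (Sum.inl ⟨p.1, k⟩)) = Sum.inl (p.2, p.1)))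
      = mainWeight δ α α' β β' f :=
  induced_is_MMDC_and_cost_eq_mainWeight_general s t δ α α' β β' hαα' hββ' hβ's f hf
end

section
/- For every perfect matching f of G' and every i ∈ Fin s, the number of indices j ∈ Fin t such that some vertex of A_i ∪ A'_i (a copy of a_i) is mapped by f to the vertex b_{j,i} is at least α i and at most α' i. -/
/- The bipartite graph `G'` of Rajabi-Alni and Bagheri, for the case
`∑ i, α' i < ∑ j, β j` (compensator set `Y` added to the left side `S`). -/

/-- Left vertex set `V_S`: copies `A_i`, extra copies `A'_i`, dummy sets `X_j`,
dummy sets `W_j`, and the compensator set `Y`. -/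
abbrev VS' (s t : ℕ) (α α' : Fin s → ℕ) (β β' : Fin t → ℕ) : Type :=
  ((i : Fin s) × Fin (α i)) ⊕ ((i : Fin s) × Fin (α' i - α i)) ⊕
    ((j : Fin t) × Fin (β' j - β j)) ⊕ ((j : Fin t) × Fin (s - β' j)) ⊕
    Fin (∑ j, β j - ∑ i, α' i)

/-- Right vertex set `V_T`: the vertices `b_{j,i}`. -/
abbrev VT' (s t : ℕ) : Type := Fin t × Fin s

variable {s t : ℕ}

/-- The allowed edges of `G'`. -/
def Allowed' (α α' : Fin s → ℕ) (β β' : Fin t → ℕ) :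
    VS' s t α α' β β' → VT' s t → Prop
  | Sum.inl ⟨i, _⟩, (_, i') => i' = i                                 -- A_i-copy to b_{j,i}
  | Sum.inr (Sum.inl ⟨i, _⟩), (_, i') => i' = i                       -- A'_i-copy to b_{j,i}
  | Sum.inr (Sum.inr (Sum.inl ⟨j, _⟩)), (j', _) => j' = j             -- X_j to b_{j,i}
  | Sum.inr (Sum.inr (Sum.inr (Sum.inl ⟨j, _⟩))), (j', _) => j' = j   -- W_j to b_{j,i}
  | Sum.inr (Sum.inr (Sum.inr (Sum.inr _))), _ => True                -- Y to every b_{j,i}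

/-- The weights of the edges of `G'`. -/
def weight' (δ : Fin s → Fin t → ℝ) (γ' : ℝ) (α α' : Fin s → ℕ) (β β' : Fin t → ℕ) :
    VS' s t α α' β β' → VT' s t → ℝ
  | Sum.inl ⟨i, _⟩, (j, _) => δ i j
  | Sum.inr (Sum.inl ⟨i, _⟩), (j, _) => δ i j
  | Sum.inr (Sum.inr (Sum.inl _)), _ => γ'
  | Sum.inr (Sum.inr (Sum.inr (Sum.inl _))), _ => 0
  | Sum.inr (Sum.inr (Sum.inr (Sum.inr _))), _ => 0

/-- A perfect matching of `G'`: a bijection `f : V_S → V_T` such that `(v, f v)` is an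
allowed edge for every `v`. -/
def IsPerfectMatching' (α α' : Fin s → ℕ) (β β' : Fin t → ℕ)
    (f : VS' s t α α' β β' ≃ VT' s t) : Prop :=
  ∀ v, Allowed' α α' β β' v (f v)

/-- Total weight of a perfect matching of `G'`. -/
def totalWeight' (δ : Fin s → Fin t → ℝ) (γ' : ℝ) (α α' : Fin s → ℕ) (β β' : Fin t → ℕ)
    (f : VS' s t α α' β β' ≃ VT' s t) : ℝ :=
  ∑ v, weight' δ γ' α α' β β' v (f v)

/-- Main weight of a perfect matching of `G'`: the sum of `δ i j` over those `v` in the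
`A_i`'s and `A'_i`'s with `f v = b_{j,i}`. -/
def mainWeight' (δ : Fin s → Fin t → ℝ) (α α' : Fin s → ℕ) (β β' : Fin t → ℕ)
    (f : VS' s t α α' β β' ≃ VT' s t) : ℝ :=
  (∑ v : (i : Fin s) × Fin (α i),
    if (f (Sum.inl v)).2 = v.1 then δ v.1 (f (Sum.inl v)).1 else 0) +
  (∑ v : (i : Fin s) × Fin (α' i - α i),
    if (f (Sum.inr (Sum.inl v))).2 = v.1 then δ v.1 (f (Sum.inr (Sum.inl v))).1 else 0)

/-!
The `α i + (α' i - α i) = α' i` copies of `aᵢ` are sent by the matching injectively into the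
column `{b_{j,i}}`, so exactly `α' i` indices `j` are hit, and `α i ≤ α' i`.
-/

theorem Nat.card_fst_of_injective_of_snd_eq {ι J I : Type*} {φ : ι → J × I}
    (hφ : Function.Injective φ) {i : I} (h : ∀ k, (φ k).2 = i) :
    Nat.card {j : J // ∃ k, φ k = (j, i)} = Nat.card ι := by
  have hφ_eq : ∀ k, φ k = ((φ k).1, i) := fun k => Prod.ext rfl (h k)
  refine (Nat.card_congr (Equiv.ofBijective (fun k => ⟨(φ k).1, k, hφ_eq k⟩) ⟨?_, ?_⟩)).symm
  · intro k k' hkk'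
    apply hφ
    rw [hφ_eq k, hφ_eq k']
    exact congrArg (·, i) (congrArg Subtype.val hkk')
  · rintro ⟨j, k, hk⟩
    exact ⟨k, Subtype.ext (by simp only [hk])⟩

def copyOfA (α α' : Fin s → ℕ) (β β' : Fin t → ℕ) (i : Fin s) :
    Fin (α i) ⊕ Fin (α' i - α i) → VS' s t α α' β β' :=
  Sum.elim (fun k => Sum.inl ⟨i, k⟩) (fun k => Sum.inr (Sum.inl ⟨i, k⟩))

section Copies

variable {α α' : Fin s → ℕ} {β β' : Fin t → ℕ}

theorem copyOfA_injective (i : Fin s) : Function.Injective (copyOfA α α' β β' i) := by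
  rintro (k | k) (k' | k') h <;> simp_all [copyOfA]

theorem IsPerfectMatching'.snd_apply_copyOfA {f : VS' s t α α' β β' ≃ VT' s t}
    (hf : IsPerfectMatching' α α' β β' f) (i : Fin s) (k : Fin (α i) ⊕ Fin (α' i - α i)) :
    (f (copyOfA α α' β β' i k)).2 = i := by
  cases k with
  | inl k => exact hf (Sum.inl ⟨i, k⟩)
  | inr k => exact hf (Sum.inr (Sum.inl ⟨i, k⟩))

end Copies

theorem demand_capacity_A_satisfied'_general
    (s t : ℕ)
    (α α' : Fin s → ℕ) (β β' : Fin t → ℕ)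
    (hαα' : ∀ i, α i ≤ α' i)
    (f : VS' s t α α' β β' ≃ VT' s t)
    (hf : IsPerfectMatching' α α' β β' f) (i : Fin s) :
    α i ≤ Nat.card {j : Fin t //
        (∃ k, f (Sum.inl ⟨i, k⟩) = (j, i)) ∨
        (∃ k, f (Sum.inr (Sum.inl ⟨i, k⟩)) = (j, i))} ∧
    Nat.card {j : Fin t //
        (∃ k, f (Sum.inl ⟨i, k⟩) = (j, i)) ∨
        (∃ k, f (Sum.inr (Sum.inl ⟨i, k⟩)) = (j, i))} ≤ α' i := by
  have hcard := Nat.card_fst_of_injective_of_snd_eq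
    (f.injective.comp (copyOfA_injective (β := β) (β' := β') i)) (hf.snd_apply_copyOfA i)
  simp only [Function.comp_apply, Sum.exists, copyOfA, Sum.elim_inl, Sum.elim_inr] at hcard
  rw [hcard, Nat.card_sum, Nat.card_fin, Nat.card_fin, Nat.add_sub_cancel' (hαα' i)]
  exact ⟨hαα' i, le_rfl⟩

/-- For every perfect matching `f` of `G'` and every `i`, the number of
indices `j` such that some copy of `aᵢ` (in `A_i ∪ A'_i`) is mapped by `f` to `b_{j,i}`
is at least `α i` and at most `α' i`. -/
theorem demand_capacity_A_satisfied'
    (s t : ℕ) (hs : 0 < s) (ht : 0 < t)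
    (δ : Fin s → Fin t → ℝ) (α α' : Fin s → ℕ) (β β' : Fin t → ℕ)
    (hαα' : ∀ i, α i ≤ α' i) (hα't : ∀ i, α' i ≤ t)
    (hββ' : ∀ j, β j ≤ β' j) (hβ's : ∀ j, β' j ≤ s)
    (hbal : ∑ i, α' i < ∑ j, β j)
    (γ' : ℝ) (hγδ : ∀ i j, γ' < δ i j)
    (f : VS' s t α α' β β' ≃ VT' s t)
    (hf : IsPerfectMatching' α α' β β' f) (i : Fin s) :
    α i ≤ Nat.card {j : Fin t //
        (∃ k, f (Sum.inl ⟨i, k⟩) = (j, i)) ∨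
        (∃ k, f (Sum.inr (Sum.inl ⟨i, k⟩)) = (j, i))} ∧
    Nat.card {j : Fin t //
        (∃ k, f (Sum.inl ⟨i, k⟩) = (j, i)) ∨
        (∃ k, f (Sum.inr (Sum.inl ⟨i, k⟩)) = (j, i))} ≤ α' i :=
  demand_capacity_A_satisfied'_general s t α α' β β' hαα' f hf i
end
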